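/- arXiv:2108.09614 — 2 statements merged into one kernel-verified Lean document; each statement's English description precedes it below -/
import Mathlib

section
/- Let A be a unital C*-algebra (or unital ring with involution), σ : ℕⁿ × ℕⁿ → 𝕋 a function, and w : ℕⁿ → A a map of isometries satisfying w_p w_q = σ(p,q) w_{p+q} and the covariance relation w_p* w_q = conj(σ(p, (p∨q)-p)) · σ(q, (p∨q)-q) · w_{(p∨q)-p} w_{(p∨q)-q}* for all p,q. Then w is Nica-covariant: w_p w_p* w_q w_q* = w_{p∨q} w_{p∨q}* for all p,q ∈ ℕⁿ. -/
/-- An isometric `σ`-representation of `ℕⁿ` in a unital C*-algebra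
satisfying the covariance relation (3) is Nica-covariant. -/
theorem covariant_implies_nica_covariant {A : Type*} [NormedRing A] [StarRing A]
    [CStarRing A] [NormedAlgebra ℂ A] [CompleteSpace A] [StarModule ℂ A]
    (n : ℕ) (σ : (Fin n → ℕ) → (Fin n → ℕ) → ℂ)
    (hσ : ∀ p q, ‖σ p q‖ = 1)
    (w : (Fin n → ℕ) → A)
    (hiso : ∀ p, star (w p) * w p = 1)
    (hmul : ∀ p q, w p * w q = σ p q • w (p + q))
    (hcov : ∀ p q, star (w p) * w q =
      ((starRingEnd ℂ) (σ p ((p ⊔ q) - p)) * σ q ((p ⊔ q) - q)) •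
        (w ((p ⊔ q) - p) * star (w ((p ⊔ q) - q)))) :
    ∀ p q, w p * star (w p) * (w q * star (w q)) = w (p ⊔ q) * star (w (p ⊔ q)) := by
  intro p q
  set r := p ⊔ q with hr
  have hunit : ∀ z : ℂ, ‖z‖ = 1 → (starRingEnd ℂ) z * z = 1 := by
    intro z hz
    rw [Complex.conj_mul']
    norm_cast
    rw [hz]; norm_num
  have hlep : p + (r - p) = r := by
    funext i
    simp only [Pi.add_apply, Pi.sub_apply, hr, Pi.sup_apply]
    omega
  have hleq : q + (r - q) = r := by
    funext i
    simp only [Pi.add_apply, Pi.sub_apply, hr, Pi.sup_apply]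
    omega
  have h1 : w p * w (r - p) = σ p (r - p) • w r := by rw [hmul, hlep]
  have h2 : w q * w (r - q) = σ q (r - q) • w r := by rw [hmul, hleq]
  have h2' : star (w (r - q)) * star (w q)
      = (starRingEnd ℂ) (σ q (r - q)) • star (w r) := by
    rw [← star_mul, h2, star_smul, starRingEnd_apply]
  have key : w p * star (w p) * (w q * star (w q))
      = w p * (star (w p) * w q) * star (w q) := by
    simp only [mul_assoc]
  rw [key, hcov, ← hr]
  rw [mul_smul_comm, smul_mul_assoc]
  have rearr : w p * (w (r - p) * star (w (r - q))) * star (w q)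
      = (w p * w (r - p)) * (star (w (r - q)) * star (w q)) := by
    simp only [mul_assoc]
  rw [rearr, h1, h2', smul_mul_assoc, mul_smul_comm, smul_smul, smul_smul]
  have : (starRingEnd ℂ) (σ p (r - p)) * σ q (r - q) *
      σ p (r - p) * (starRingEnd ℂ) (σ q (r - q)) = 1 := by
    have e1 := hunit _ (hσ p (r - p))
    have e2 := hunit _ (hσ q (r - q))
    calc _ = ((starRingEnd ℂ) (σ p (r - p)) * σ p (r - p)) *
        ((starRingEnd ℂ) (σ q (r - q)) * σ q (r - q)) := by ring
      _ = 1 := by rw [e1, e2, mul_one]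
  rw [this, one_smul]
end

section
/- Let w : ℕⁿ → A be a covariant isometric σ-representation (isometries with w_p w_q = σ(p,q)w_{p+q} and w_p* w_q = conj(σ(p,(p∨q)-p))·σ(q,(p∨q)-q)·w_{(p∨q)-p} w_{(p∨q)-q}*). If x, y ∈ ℕⁿ satisfy x ∨ y = x + y, then w_x w_x* w_y = w_y w_x w_x*. -/
/-- If `w` is a covariant isometric `σ`-representation of `ℕⁿ` and
`x ∨ y = x + y`, then the range projection `w_x w_x*` commutes with `w_y`. -/
theorem range_projection_commutes {A : Type*} [NormedRing A] [StarRing A]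
    [CStarRing A] [NormedAlgebra ℂ A] [CompleteSpace A] [StarModule ℂ A]
    (n : ℕ) (σ : (Fin n → ℕ) → (Fin n → ℕ) → ℂ)
    (hσ : ∀ p q, ‖σ p q‖ = 1)
    (hcoc : ∀ p q r, σ p q * σ (p + q) r = σ p (q + r) * σ q r)
    (w : (Fin n → ℕ) → A)
    (hiso : ∀ p, star (w p) * w p = 1)
    (hmul : ∀ p q, w p * w q = σ p q • w (p + q))
    (hcov : ∀ p q, star (w p) * w q =
      ((starRingEnd ℂ) (σ p ((p ⊔ q) - p)) * σ q ((p ⊔ q) - q)) •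
        (w ((p ⊔ q) - p) * star (w ((p ⊔ q) - q)))) :
    ∀ x y : Fin n → ℕ, x ⊔ y = x + y →
      w x * star (w x) * w y = w y * (w x * star (w x)) := by
  intro x y hxy
  have h1 := hcov x y
  rw [hxy, add_tsub_cancel_left, add_tsub_cancel_right] at h1
  have hc : (starRingEnd ℂ) (σ x y) * σ x y = 1 := by
    rw [mul_comm, Complex.mul_conj', hσ x y]
    norm_num
  calc w x * star (w x) * w y
      = w x * (star (w x) * w y) := by rw [mul_assoc]
    _ = ((starRingEnd ℂ) (σ x y) * σ y x) • (w x * (w y * star (w x))) := by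
        rw [h1, mul_smul_comm]
    _ = ((starRingEnd ℂ) (σ x y) * σ y x) • ((σ x y • w (x + y)) * star (w x)) := by
        rw [← mul_assoc, hmul]
    _ = (σ y x * ((starRingEnd ℂ) (σ x y) * σ x y)) • (w (x + y) * star (w x)) := by
        rw [smul_mul_assoc, smul_smul]; ring_nf
    _ = σ y x • (w (y + x) * star (w x)) := by rw [hc, mul_one, add_comm]
    _ = w y * w x * star (w x) := by rw [hmul, smul_mul_assoc]
    _ = w y * (w x * star (w x)) := by rw [mul_assoc]
end
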